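/- (Corollary 5, relativistic form.) Let X be a complex Banach space, let x₀ ∈ ℝ be a point of an arbitrary evolution direction (a spatial coordinate xⁱ rather than time), and let U : ℝ → B(X) be differentiable at x₀ with derivative U′, such that U(x₀) is invertible in B(X) and U(x₀) commutes with U′. Let η ∈ ℂ with η ≠ 0, 1 be such that 1 − η⁻¹U(x) is invertible in B(X) for all x, write I_η := (1 − η⁻¹U(x₀))⁻¹, let D ∈ B(X) be the derivative of x ↦ (1 − η⁻¹U(x))⁻¹ at x₀, and assume I_η − 1 is invertible. Set ν := η/(1−η), and let a₁′, a₂′ ∈ B(X) be alternative infinitesimal generators: there exist a₁, a₂ ∈ B(X) with exp(a₁) = η·I_η + (ν−η)·1 and exp(a₂) = I_η + ν·1, satisfying a₁′ ∘ exp(a₁) = η·D and a₂′ ∘ exp(a₂) = D, with a₁′ and a₂′ commuting with I_η. Then the infinitesimal generator K := U′ ∘ U(x₀)⁻¹ with respect to the direction xⁱ is represented as K = (1 + ν·(η·(I_η − 1))⁻¹) ∘ a₁′ − (1 + ν·I_η⁻¹) ∘ a₂′. -/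

import Mathlib

/-!
Since `ν - η = ην`, the two exponentials are proportional, `exp a₁ = η • exp a₂`, so `a₁' = a₂'`
and the right-hand side is `ν (η⁻¹ (Iη - 1)⁻¹ - Iη⁻¹) a₂'`. As `ν η⁻¹ = 1 + ν`, the partial
fraction `(Iη - 1)⁻¹ - Iη⁻¹ = (Iη - 1)⁻¹ Iη⁻¹` turns the coefficient into
`(Iη - 1)⁻¹ Iη⁻¹ (Iη + ν)`, and `(Iη + ν) a₂' = D = η⁻¹ Iη U' Iη` by differentiating the
inverse. On the other side `U(x₀) = η (1 - η⁻¹ U(x₀)) (Iη - 1)`, so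
`U(x₀)⁻¹ = η⁻¹ (Iη - 1)⁻¹ Iη`, and the two sides agree because `U'` commutes with `Iη`.
-/

open scoped Ring

theorem Commute.ringInverse_right {M₀ : Type*} [MonoidWithZero M₀] {a b : M₀}
    (h : Commute a b) : Commute a b⁻¹ʳ := by
  by_cases hb : IsUnit b
  · obtain ⟨u, rfl⟩ := hb
    rw [Ring.inverse_unit]
    exact h.units_inv_right
  · rw [Ring.inverse_non_unit b hb]
    exact Commute.zero_right a

theorem Ring.inverse_sub_one_sub_inverse {R : Type*} [Ring R] {x : R} (hx : IsUnit x)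
    (hx₁ : IsUnit (x - 1)) : (x - 1)⁻¹ʳ - x⁻¹ʳ = (x - 1)⁻¹ʳ * x⁻¹ʳ := by
  rw [Ring.inverse_sub_inverse (iff_of_true hx₁ hx), sub_sub_cancel, mul_one]

theorem HasDerivAt.ringInverse {𝕜 R : Type*} [NontriviallyNormedField 𝕜] [NormedRing R]
    [HasSummableGeomSeries R] [NormedAlgebra 𝕜 R] {f : 𝕜 → R} {f' : R} {x : 𝕜}
    (hf : HasDerivAt f f' x) (hx : IsUnit (f x)) :
    HasDerivAt (fun y => (f y)⁻¹ʳ) (-((f x)⁻¹ʳ * f' * (f x)⁻¹ʳ)) x := by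
  have hinv := hasFDerivAt_ringInverse (𝕜 := 𝕜) hx.unit
  rw [hx.unit_spec] at hinv
  rw [Ring.inverse_of_isUnit hx]
  exact hinv.comp_hasDerivAt x hf

theorem HasDerivAt.inverse_one_sub_smul {𝕜 𝕜' R : Type*} [NontriviallyNormedField 𝕜]
    [NormedRing R] [HasSummableGeomSeries R] [NormedAlgebra 𝕜 R] [Field 𝕜'] [Algebra 𝕜' R]
    [ContinuousConstSMul 𝕜' R] [SMulCommClass 𝕜 𝕜' R] {f : 𝕜 → R} {f' : R} {x : 𝕜}
    (hf : HasDerivAt f f' x) (c : 𝕜') (hx : IsUnit (1 - c • f x)) :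
    HasDerivAt (fun y => (1 - c • f y)⁻¹ʳ)
      (c • ((1 - c • f x)⁻¹ʳ * f' * (1 - c • f x)⁻¹ʳ)) x := by
  simpa [mul_smul_comm, smul_mul_assoc] using ((hf.const_smul c).const_sub 1).ringInverse hx

theorem NormedSpace.isUnit_exp' (𝕂 : Type*) {𝔸 : Type*} [RCLike 𝕂] [NormedRing 𝔸]
    [NormedAlgebra 𝕂 𝔸] [CompleteSpace 𝔸] (x : 𝔸) : IsUnit (exp x) :=
  isUnit_exp_of_mem_ball (𝕂 := 𝕂) ((expSeries_radius_eq_top 𝕂 𝔸).symm ▸ edist_lt_top _ _)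

section Resolvent

variable {𝕜 R : Type*} [Field 𝕜] [Ring R] [Algebra 𝕜 R]

theorem Ring.inverse_smul (c : 𝕜) (x : R) : (c • x)⁻¹ʳ = c⁻¹ • x⁻¹ʳ := by
  rcases eq_or_ne c 0 with rfl | hc
  · simp
  by_cases hx : IsUnit x
  · have hcx : IsUnit (c • x) := (isUnit_smul_iff (Units.mk0 c hc) x).mpr hx
    refine (((Ring.eq_mul_inverse_iff_mul_eq _ 1 _ hcx).mpr ?_).trans (one_mul _)).symm
    rw [smul_mul_smul_comm, inv_mul_cancel₀ hc, Ring.inverse_mul_cancel x hx, one_smul]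
  · have hcx : ¬IsUnit (c • x) := (isUnit_smul_iff (Units.mk0 c hc) x).not.mpr hx
    rw [Ring.inverse_non_unit x hx, Ring.inverse_non_unit _ hcx, smul_zero]

theorem inverse_eq_smul_inverse_sub_one_mul {η : 𝕜} (hη : η ≠ 0) {u I : R}
    (hI : I = (1 - η⁻¹ • u)⁻¹ʳ) (hu : IsUnit (1 - η⁻¹ • u)) : u⁻¹ʳ = η⁻¹ • ((I - 1)⁻¹ʳ * I) := by
  have hfactor : u = η • ((1 - η⁻¹ • u) * (I - 1)) := by
    rw [mul_sub, hI, Ring.mul_inverse_cancel _ hu, mul_one, sub_sub_cancel, smul_inv_smul₀ hη]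
  rw [hfactor, Ring.inverse_smul, Ring.inverse_mul (.inl hu), ← hI]

theorem smul_inverse_smul_sub_one_sub_smul_inverse {η ν : 𝕜} (hη₀ : η ≠ 0) (hη₁ : η ≠ 1)
    (hν : ν = η / (1 - η)) {I : R} (hI : IsUnit I) (hI₁ : IsUnit (I - 1)) :
    ν • (η • (I - 1))⁻¹ʳ - ν • I⁻¹ʳ = (I - 1)⁻¹ʳ * I⁻¹ʳ * (I + ν • 1) := by
  have hscalar : ν * η⁻¹ = 1 + ν := by
    rw [hν]
    field_simp [sub_ne_zero.mpr hη₁.symm]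
    ring
  rw [Ring.inverse_smul, smul_smul, hscalar, mul_add, Ring.inverse_mul_cancel_right _ _ hI,
    mul_smul_comm, mul_one, ← Ring.inverse_sub_one_sub_inverse hI hI₁]
  module

end Resolvent

theorem stmt_13_general {X : Type*} [NormedAddCommGroup X] [NormedSpace ℂ X] [CompleteSpace X]
    (x₀ : ℝ) (U : ℝ → X →L[ℂ] X) (U' : X →L[ℂ] X)
    (hU : HasDerivAt U U' x₀)
    (hcomm : U x₀ * U' = U' * U x₀)
    (η : ℂ) (hη0 : η ≠ 0) (hη1 : η ≠ 1)
    (hres : ∀ x : ℝ, IsUnit (1 - η⁻¹ • U x))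
    (Iη : X →L[ℂ] X) (hIη : Iη = Ring.inverse (1 - η⁻¹ • U x₀))
    (D : X →L[ℂ] X)
    (hD : HasDerivAt (fun x => Ring.inverse (1 - η⁻¹ • U x)) D x₀)
    (h1 : IsUnit (Iη - 1))
    (ν : ℂ) (hν : ν = η / (1 - η))
    (a₁ a₂ a₁' a₂' : X →L[ℂ] X)
    (he1 : NormedSpace.exp a₁ = η • Iη + (ν - η) • 1)
    (he2 : NormedSpace.exp a₂ = Iη + ν • 1)
    (hc1 : a₁' * NormedSpace.exp a₁ = η • D)
    (hc2 : a₂' * NormedSpace.exp a₂ = D)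
    (hca2 : a₂' * Iη = Iη * a₂') :
    U' * Ring.inverse (U x₀) =
      (1 + ν • Ring.inverse (η • (Iη - 1))) * a₁'
      - (1 + ν • Ring.inverse Iη) * a₂' := by
  have hI : IsUnit Iη := hIη ▸ (hres x₀).ringInverse
  have hDeq : D = η⁻¹ • (Iη * U' * Iη) :=
    hD.unique (hIη ▸ hU.inverse_one_sub_smul η⁻¹ (hres x₀))
  have hU'I : Commute U' Iη := hIη ▸
    ((Commute.one_right U').sub_right ((Commute.symm hcomm).smul_right η⁻¹)).ringInverse_right
  have hU'E : Commute U' (Iη - 1)⁻¹ʳ := (hU'I.sub_right (Commute.one_right U')).ringInverse_right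
  have hexp : NormedSpace.exp a₁ = η • NormedSpace.exp a₂ := by
    have : ν - η = η * ν := by
      rw [hν]
      field_simp [sub_ne_zero.mpr hη1.symm]
      ring
    rw [he1, he2, smul_add, smul_smul, this]
  have ha : a₁' = a₂' := by
    refine (NormedSpace.isUnit_exp' ℂ a₂).mul_right_cancel ?_
    rw [hc2, ← smul_right_inj hη0, ← mul_smul_comm, ← hexp, hc1]
  have haD : (Iη + ν • 1) * a₂' = D := by
    rw [← hc2, he2]
    exact (Commute.add_right hca2 ((Commute.one_right a₂').smul_right ν)).eq.symm
  calc U' * (U x₀)⁻¹ʳ = η⁻¹ • ((Iη - 1)⁻¹ʳ * (U' * Iη)) := by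
        rw [inverse_eq_smul_inverse_sub_one_mul hη0 hIη (hres x₀), mul_smul_comm, ← mul_assoc,
          hU'E.eq, mul_assoc]
    _ = (Iη - 1)⁻¹ʳ * Iη⁻¹ʳ * D := by
        rw [hDeq, mul_smul_comm, mul_assoc, mul_assoc Iη, Ring.inverse_mul_cancel_left _ _ hI]
    _ = (Iη - 1)⁻¹ʳ * Iη⁻¹ʳ * (Iη + ν • 1) * a₂' := by rw [mul_assoc _ _ a₂', haD]
    _ = _ := by
        rw [ha, ← sub_mul, add_sub_add_left_eq_sub,
          smul_inverse_smul_sub_one_sub_smul_inverse hη0 hη1 hν hI h1]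

/-- Corollary 5, relativistic form: the same logarithmic representation with the
evolution direction an arbitrary coordinate `xⁱ` (evolution parameter `x₀ ∈ ℝ`), with
`ν = η/(1-η)`: the infinitesimal generator `K = U' ∘ U(x₀)⁻¹` is represented as
`(1 + ν (η(Iη-1))⁻¹) a₁' - (1 + ν Iη⁻¹) a₂'`. -/
theorem stmt_13 {X : Type*} [NormedAddCommGroup X] [NormedSpace ℂ X] [CompleteSpace X]
    (x₀ : ℝ) (U : ℝ → X →L[ℂ] X) (U' : X →L[ℂ] X)
    (hU : HasDerivAt U U' x₀) (hUinv : IsUnit (U x₀))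
    (hcomm : U x₀ * U' = U' * U x₀)
    (η : ℂ) (hη0 : η ≠ 0) (hη1 : η ≠ 1)
    (hres : ∀ x : ℝ, IsUnit (1 - η⁻¹ • U x))
    (Iη : X →L[ℂ] X) (hIη : Iη = Ring.inverse (1 - η⁻¹ • U x₀))
    (D : X →L[ℂ] X)
    (hD : HasDerivAt (fun x => Ring.inverse (1 - η⁻¹ • U x)) D x₀)
    (h1 : IsUnit (Iη - 1))
    (ν : ℂ) (hν : ν = η / (1 - η))
    (a₁ a₂ a₁' a₂' : X →L[ℂ] X)
    (he1 : NormedSpace.exp a₁ = η • Iη + (ν - η) • 1)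
    (he2 : NormedSpace.exp a₂ = Iη + ν • 1)
    (hc1 : a₁' * NormedSpace.exp a₁ = η • D)
    (hc2 : a₂' * NormedSpace.exp a₂ = D)
    (hca1 : a₁' * Iη = Iη * a₁') (hca2 : a₂' * Iη = Iη * a₂') :
    U' * Ring.inverse (U x₀) =
      (1 + ν • Ring.inverse (η • (Iη - 1))) * a₁'
      - (1 + ν • Ring.inverse Iη) * a₂' :=
  stmt_13_general x₀ U U' hU hcomm η hη0 hη1 hres Iη hIη D hD h1 ν hν a₁ a₂ a₁' a₂' he1 he2 hc1 hc2
    hca2
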